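/- arXiv:2208.01025 — 2 statements merged into one kernel-verified Lean document; each statement's English description precedes it below -/
import Mathlib

section
/- Let n ≥ 2 be an integer and let ρ, A, C₁, D, E, r₀ be real constants with ρ > 0, A ≥ 0, C₁ > 0, D ≥ 0, E ≥ 0 and r₀ > 0. Let z : [r₀, ∞) → ℝ be continuous and let φ : [r₀, ∞) → ℝ be continuously differentiable, and suppose that for every r ≥ r₀ one has (i) z(r) + (1/((n−1)·r))·( ∫_{r₀}^{r} (z(t) + φ'(t)) dt )² ≤ ρ·A·r³ + C₁, and (ii) φ(r) − φ(r₀) ≥ −D − E·r². Then for every r ≥ r₀, ∫_{r₀}^{r} z(t) dt ≤ D + √(2·C₁·(n−1)·r) + E·r² + √((n−1)·ρ·A)·r². -/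
open Set MeasureTheory intervalIntegral

/-- Key integral estimate (inequality (2.6)) from the proof of Lemma 2.1:
a one-variable real-analysis lemma. -/
theorem stmt_0 (n : ℕ) (hn : 2 ≤ n) (ρ A C₁ D E r₀ : ℝ)
    (hρ : 0 < ρ) (hA : 0 ≤ A) (hC₁ : 0 < C₁) (hD : 0 ≤ D) (hE : 0 ≤ E) (hr₀ : 0 < r₀)
    (z φ φ' : ℝ → ℝ)
    (hz : ContinuousOn z (Ici r₀))
    (hφ : ∀ r ∈ Ici r₀, HasDerivAt φ (φ' r) r)
    (hφ' : ContinuousOn φ' (Ici r₀))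
    (hi : ∀ r ≥ r₀,
      z r + (1 / (((n : ℝ) - 1) * r)) * (∫ t in r₀..r, (z t + φ' t)) ^ 2
        ≤ ρ * A * r ^ 3 + C₁)
    (hii : ∀ r ≥ r₀, φ r - φ r₀ ≥ -D - E * r ^ 2) :
    ∀ r ≥ r₀,
      (∫ t in r₀..r, z t)
        ≤ D + Real.sqrt (2 * C₁ * ((n : ℝ) - 1) * r) + E * r ^ 2
            + Real.sqrt (((n : ℝ) - 1) * ρ * A) * r ^ 2 := by
  have hc1 : (1:ℝ) ≤ (n:ℝ) - 1 := by
    have : (2:ℝ) ≤ (n:ℝ) := by exact_mod_cast hn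
    linarith
  set c1 : ℝ := (n:ℝ) - 1 with hc1def
  intro r₁ hr₁
  set RHS : ℝ → ℝ := fun r =>
    D + Real.sqrt (2 * C₁ * c1 * r) + E * r ^ 2 + Real.sqrt (c1 * ρ * A) * r ^ 2 with hRHSdef
  show (∫ t in r₀..r₁, z t) ≤ RHS r₁
  -- integrability facts
  have hsub : ∀ r ≥ r₀, Set.uIcc r₀ r ⊆ Ici r₀ := by
    intro r hr
    rw [Set.uIcc_of_le hr]
    exact Icc_subset_Ici_self
  have hzi : ∀ r ≥ r₀, IntervalIntegrable z volume r₀ r :=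
    fun r hr => (hz.mono (hsub r hr)).intervalIntegrable
  have hφi : ∀ r ≥ r₀, IntervalIntegrable φ' volume r₀ r :=
    fun r hr => (hφ'.mono (hsub r hr)).intervalIntegrable
  set G : ℝ → ℝ := fun r => ∫ t in r₀..r, z t with hGdef
  have hFsplit : ∀ r ≥ r₀, (∫ t in r₀..r, (z t + φ' t)) = G r + (φ r - φ r₀) := by
    intro r hr
    rw [intervalIntegral.integral_add (hzi r hr) (hφi r hr),
      intervalIntegral.integral_eq_sub_of_hasDerivAt (fun x hx => hφ x (hsub r hr hx))
        (hφi r hr)]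
  -- key pointwise estimate
  have key : ∀ r ≥ r₀, RHS r ≤ G r → z r ≤ -C₁ := by
    intro r hr hGe
    have hrpos : (0:ℝ) < r := lt_of_lt_of_le hr₀ hr
    have hcr : (0:ℝ) < c1 * r := by nlinarith
    set F := ∫ t in r₀..r, (z t + φ' t) with hFdef
    have hFval : F = G r + (φ r - φ r₀) := hFsplit r hr
    have hiiR := hii r hr
    have h1 : Real.sqrt (2 * C₁ * c1 * r) + Real.sqrt (c1 * ρ * A) * r ^ 2 ≤ F := by
      have : RHS r = D + Real.sqrt (2 * C₁ * c1 * r) + E * r ^ 2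
          + Real.sqrt (c1 * ρ * A) * r ^ 2 := rfl
      rw [hFval]; rw [this] at hGe; linarith
    have ha : (0:ℝ) ≤ Real.sqrt (2 * C₁ * c1 * r) := Real.sqrt_nonneg _
    have hb : (0:ℝ) ≤ Real.sqrt (c1 * ρ * A) := Real.sqrt_nonneg _
    have ha2 : Real.sqrt (2 * C₁ * c1 * r) ^ 2 = 2 * C₁ * c1 * r :=
      Real.sq_sqrt (by positivity)
    have hb2 : Real.sqrt (c1 * ρ * A) ^ 2 = c1 * ρ * A :=
      Real.sq_sqrt (by positivity)
    have hF0 : (0:ℝ) ≤ Real.sqrt (2 * C₁ * c1 * r) + Real.sqrt (c1 * ρ * A) * r ^ 2 :=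
      add_nonneg ha (mul_nonneg hb (sq_nonneg r))
    have hsq : (Real.sqrt (2 * C₁ * c1 * r) + Real.sqrt (c1 * ρ * A) * r ^ 2) ^ 2 ≤ F ^ 2 :=
      pow_le_pow_left₀ hF0 h1 2
    have hF2 : 2 * C₁ * c1 * r + c1 * ρ * A * r ^ 4 ≤ F ^ 2 := by
      have hab : (0:ℝ) ≤ 2 * (Real.sqrt (2 * C₁ * c1 * r) * Real.sqrt (c1 * ρ * A)) * r ^ 2 := by
        have := mul_nonneg (mul_nonneg ha hb) (sq_nonneg r)
        linarith
      calc 2 * C₁ * c1 * r + c1 * ρ * A * r ^ 4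
          = Real.sqrt (2 * C₁ * c1 * r) ^ 2 + Real.sqrt (c1 * ρ * A) ^ 2 * r ^ 4 := by
            rw [ha2, hb2]
        _ ≤ Real.sqrt (2 * C₁ * c1 * r) ^ 2
              + 2 * (Real.sqrt (2 * C₁ * c1 * r) * Real.sqrt (c1 * ρ * A)) * r ^ 2
              + Real.sqrt (c1 * ρ * A) ^ 2 * r ^ 4 := by linarith
        _ = (Real.sqrt (2 * C₁ * c1 * r) + Real.sqrt (c1 * ρ * A) * r ^ 2) ^ 2 := by ring
        _ ≤ F ^ 2 := hsq
    have hiR := hi r hr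
    have hdiv : 2 * C₁ + ρ * A * r ^ 3 ≤ (1 / (c1 * r)) * F ^ 2 := by
      rw [one_div, inv_mul_eq_div, le_div_iff₀ hcr]
      nlinarith
    linarith
  -- continuity facts
  have hGcont : ContinuousOn G (Icc r₀ r₁) := by
    have := intervalIntegral.continuousOn_primitive_interval
      (f := z) (a := r₀) (b := r₁) (μ := volume)
      ((hz.mono (hsub r₁ hr₁)).integrableOn_compact (isCompact_uIcc))
    rwa [Set.uIcc_of_le hr₁] at this
  have hRHScont : Continuous RHS := by
    apply Continuous.add
    apply Continuous.add
    apply Continuous.add continuous_const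
    · exact Real.continuous_sqrt.comp (continuous_const.mul continuous_id)
    · exact continuous_const.mul (continuous_pow 2)
    · exact continuous_const.mul (continuous_pow 2)
  -- contradiction setup
  by_contra hcon
  push_neg at hcon
  set S : Set ℝ := {r | r ∈ Icc r₀ r₁ ∧ G r - RHS r ≤ 0} with hSdef
  have hRHSr₀ : (0:ℝ) ≤ RHS r₀ := by
    have h1 := Real.sqrt_nonneg (2 * C₁ * c1 * r₀)
    have h2 := Real.sqrt_nonneg (c1 * ρ * A)
    have h3 : (0:ℝ) ≤ E * r₀ ^ 2 := by positivity
    have h4 : (0:ℝ) ≤ Real.sqrt (c1 * ρ * A) * r₀ ^ 2 := by positivity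
    show (0:ℝ) ≤ D + Real.sqrt (2 * C₁ * c1 * r₀) + E * r₀ ^ 2
      + Real.sqrt (c1 * ρ * A) * r₀ ^ 2
    linarith
  have hr₀S : r₀ ∈ S := by
    refine ⟨⟨le_refl _, hr₁⟩, ?_⟩
    have hG0 : G r₀ = 0 := intervalIntegral.integral_same
    rw [hG0]; linarith
  have hSne : S.Nonempty := ⟨r₀, hr₀S⟩
  have hSbdd : BddAbove S := ⟨r₁, fun x hx => hx.1.2⟩
  have hSclosed : IsClosed S := by
    have hH : ContinuousOn (fun r => G r - RHS r) (Icc r₀ r₁) :=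
      hGcont.sub hRHScont.continuousOn
    have : S = Icc r₀ r₁ ∩ (fun r => G r - RHS r) ⁻¹' (Iic 0) := by
      ext x; simp [hSdef, Set.mem_setOf_eq, and_comm]
    rw [this]
    exact hH.preimage_isClosed_of_isClosed isClosed_Icc isClosed_Iic
  set rs := sSup S with hrsdef
  have hrsS : rs ∈ S := hSclosed.csSup_mem hSne hSbdd
  have hrs₀ : r₀ ≤ rs := hrsS.1.1
  have hrs₁ : rs ≤ r₁ := hrsS.1.2
  have hrsne : rs ≠ r₁ := by
    intro h
    have := hrsS.2
    rw [h] at this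
    linarith
  have hrslt : rs < r₁ := lt_of_le_of_ne hrs₁ hrsne
  -- on (rs, r₁], G > RHS
  have hgt : ∀ x ∈ Ioc rs r₁, RHS x < G x := by
    intro x hx
    by_contra hle
    push_neg at hle
    have hxS : x ∈ S := ⟨⟨le_trans hrs₀ (le_of_lt hx.1), hx.2⟩, by linarith⟩
    have := le_csSup hSbdd hxS
    exact absurd this (not_le.mpr hx.1)
  -- G rs ≥ RHS rs by right continuity
  have hge : RHS rs ≤ G rs := by
    have hmemrs : rs ∈ Icc r₀ r₁ := ⟨hrs₀, hrs₁⟩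
    have hcw : ContinuousWithinAt (fun r => G r - RHS r) (Ioc rs r₁) rs := by
      refine ((hGcont.sub hRHScont.continuousOn) rs hmemrs).mono ?_
      intro y hy
      exact ⟨le_trans hrs₀ (le_of_lt hy.1), hy.2⟩
    have hne : (nhdsWithin rs (Ioc rs r₁)).NeBot := by
      refine mem_closure_iff_nhdsWithin_neBot.mp ?_
      rw [closure_Ioc (ne_of_lt hrslt)]
      exact ⟨le_refl _, le_of_lt hrslt⟩
    have hev : ∀ᶠ x in nhdsWithin rs (Ioc rs r₁), (0:ℝ) ≤ G x - RHS x := by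
      filter_upwards [self_mem_nhdsWithin] with x hx
      have := hgt x hx
      linarith
    have h0 : (0:ℝ) ≤ G rs - RHS rs := ge_of_tendsto hcw hev
    linarith
  -- z ≤ 0 on [rs, r₁]
  have hzneg : ∀ x ∈ Icc rs r₁, z x ≤ 0 := by
    intro x hx
    have hxr₀ : r₀ ≤ x := le_trans hrs₀ hx.1
    rcases eq_or_lt_of_le hx.1 with h | h
    · have := key rs hrs₀ hge
      rw [← h]; linarith
    · have := key x hxr₀ (le_of_lt (hgt x ⟨h, hx.2⟩))
      linarith
  -- the integral over [rs, r₁] is nonpositive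
  have hzi' : IntervalIntegrable z volume rs r₁ := by
    apply (hz.mono ?_).intervalIntegrable
    rw [Set.uIcc_of_le (le_of_lt hrslt)]
    exact fun y hy => le_trans hrs₀ hy.1
  have hint_nonpos : (∫ t in rs..r₁, z t) ≤ 0 := by
    have h := intervalIntegral.integral_nonneg (μ := volume) (f := fun t => -z t) (le_of_lt hrslt)
      (fun u hu => by have := hzneg u hu; simpa using this)
    rw [intervalIntegral.integral_neg] at h
    linarith
  have hsplit : G rs + (∫ t in rs..r₁, z t) = G r₁ :=
    intervalIntegral.integral_add_adjacent_intervals (hzi rs hrs₀) hzi'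
  -- RHS is monotone
  have hRHSmono : RHS rs ≤ RHS r₁ := by
    have hc1pos : (0:ℝ) < c1 := by linarith
    have hs1 : Real.sqrt (2 * C₁ * c1 * rs) ≤ Real.sqrt (2 * C₁ * c1 * r₁) := by
      apply Real.sqrt_le_sqrt
      exact mul_le_mul_of_nonneg_left hrs₁ (le_of_lt (mul_pos (mul_pos two_pos hC₁) hc1pos))
    have hsq : rs ^ 2 ≤ r₁ ^ 2 := pow_le_pow_left₀ (le_trans (le_of_lt hr₀) hrs₀) hrs₁ 2
    have h2 : E * rs ^ 2 ≤ E * r₁ ^ 2 := mul_le_mul_of_nonneg_left hsq hE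
    have h3 : Real.sqrt (c1 * ρ * A) * rs ^ 2 ≤ Real.sqrt (c1 * ρ * A) * r₁ ^ 2 :=
      mul_le_mul_of_nonneg_left hsq (Real.sqrt_nonneg _)
    show D + Real.sqrt (2 * C₁ * c1 * rs) + E * rs ^ 2 + Real.sqrt (c1 * ρ * A) * rs ^ 2
      ≤ D + Real.sqrt (2 * C₁ * c1 * r₁) + E * r₁ ^ 2 + Real.sqrt (c1 * ρ * A) * r₁ ^ 2
    linarith
  have hGr₁ : G r₁ = ∫ t in r₀..r₁, z t := rfl
  have hrs2 := hrsS.2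
  -- G r₁ ≤ G rs ≤ RHS rs ≤ RHS r₁ < G r₁
  have hfin : G r₁ ≤ RHS r₁ := by linarith
  rw [hGr₁] at hfin
  exact absurd hfin (not_le.mpr hcon)
end

section
/- Let r ≥ 2 be a real number and let ψ : ℝ → ℝ be continuously differentiable. Define the piecewise-linear cutoff φ_r : [0, r] → ℝ by φ_r(t) = t for t ∈ [0,1], φ_r(t) = 1 for t ∈ [1, r−1], and φ_r(t) = r − t for t ∈ [r−1, r]. Then ∫_{0}^{r} φ_r(t)²·ψ'(t) dt ≤ sup_{t ∈ [0,1]} |ψ(t)| + sup_{t ∈ [r−1,r]} ψ(t). -/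
/-!
On the two ramps of the cutoff integrate by parts, on the plateau use the fundamental theorem of
calculus: the boundary terms `ψ 1` and `ψ (r - 1)` cancel, leaving
`∫ φ_r² ψ' = ∫_{r-1}^r 2 (r - t) ψ t dt - ∫_0^1 2 t ψ t dt`.
Both weights `2 (r - t)` and `2 t` are probability densities on their intervals, so the two
integrals are averages of `ψ`, bounded by the respective suprema.
-/

open Set MeasureTheory intervalIntegral

noncomputable def trapezoidCutoff (r t : ℝ) : ℝ :=
  if t ≤ 1 then t else if t ≤ r - 1 then 1 else r - t

section TrapezoidCutoff

variable {r t : ℝ}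

theorem trapezoidCutoff_of_le_one (ht : t ≤ 1) : trapezoidCutoff r t = t := if_pos ht

theorem trapezoidCutoff_of_mem_Icc (ht : t ∈ Icc 1 (r - 1)) : trapezoidCutoff r t = 1 := by
  unfold trapezoidCutoff
  split_ifs <;> linarith [ht.1, ht.2]

theorem trapezoidCutoff_of_sub_one_le (hr : 2 ≤ r) (ht : r - 1 ≤ t) :
    trapezoidCutoff r t = r - t := by
  unfold trapezoidCutoff
  split_ifs <;> linarith

theorem continuous_trapezoidCutoff (hr : 2 ≤ r) : Continuous (trapezoidCutoff r) := by
  refine continuous_id.if_le (continuous_const.if_le (continuous_const.sub continuous_id)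
    continuous_id continuous_const fun t ht => by linarith) continuous_id continuous_const ?_
  intro t ht
  simp only [id_eq] at ht ⊢
  rw [if_pos (by linarith), ht]

end TrapezoidCutoff

section WeightedIntegrals

variable {ψ ψ' w f : ℝ → ℝ} {a b B : ℝ}

theorem integral_sub_sq_mul_deriv (hψ : ∀ x ∈ uIcc a b, HasDerivAt ψ (ψ' x) x)
    (hψ' : IntervalIntegrable ψ' volume a b) :
    ∫ t in a..b, (t - a) ^ 2 * ψ' t
      = (b - a) ^ 2 * ψ b - ∫ t in a..b, 2 * (t - a) * ψ t := by
  have hu : ∀ x ∈ uIcc a b, HasDerivAt (fun t => (t - a) ^ 2) (2 * (x - a)) x := fun x _ => by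
    simpa using ((hasDerivAt_id' x).sub_const a).fun_pow 2
  rw [integral_mul_deriv_eq_deriv_mul hu hψ
    ((by fun_prop : Continuous _).intervalIntegrable _ _) hψ']
  simp

theorem integral_sq_sub_mul_deriv (hψ : ∀ x ∈ uIcc a b, HasDerivAt ψ (ψ' x) x)
    (hψ' : IntervalIntegrable ψ' volume a b) :
    ∫ t in a..b, (b - t) ^ 2 * ψ' t
      = (∫ t in a..b, 2 * (b - t) * ψ t) - (b - a) ^ 2 * ψ a := by
  have hu : ∀ x ∈ uIcc a b, HasDerivAt (fun t => (b - t) ^ 2) (-(2 * (b - x))) x :=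
    fun x _ => by
      simpa using ((hasDerivAt_id' x).const_sub b).fun_pow 2
  rw [integral_mul_deriv_eq_deriv_mul hu hψ
    ((by fun_prop : Continuous _).intervalIntegrable _ _) hψ']
  simp only [neg_mul, intervalIntegral.integral_neg]
  ring

theorem integral_mul_le_of_forall_le (hab : a ≤ b) (hw : ∀ t ∈ Icc a b, 0 ≤ w t)
    (hwi : IntervalIntegrable w volume a b)
    (hwf : IntervalIntegrable (fun t => w t * f t) volume a b)
    (hf : ∀ t ∈ Icc a b, f t ≤ B) :
    ∫ t in a..b, w t * f t ≤ (∫ t in a..b, w t) * B := by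
  rw [← intervalIntegral.integral_mul_const]
  exact integral_mono_on hab hwf (hwi.mul_const B) fun t ht =>
    mul_le_mul_of_nonneg_left (hf t ht) (hw t ht)

theorem le_integral_mul_of_forall_le (hab : a ≤ b) (hw : ∀ t ∈ Icc a b, 0 ≤ w t)
    (hwi : IntervalIntegrable w volume a b)
    (hwf : IntervalIntegrable (fun t => w t * f t) volume a b)
    (hf : ∀ t ∈ Icc a b, B ≤ f t) :
    (∫ t in a..b, w t) * B ≤ ∫ t in a..b, w t * f t := by
  rw [← intervalIntegral.integral_mul_const]
  exact integral_mono_on hab (hwi.mul_const B) hwf fun t ht =>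
    mul_le_mul_of_nonneg_left (hf t ht) (hw t ht)

theorem le_sSup_image_Icc (hf : ContinuousOn f (Icc a b)) {t : ℝ} (ht : t ∈ Icc a b) :
    f t ≤ sSup (f '' Icc a b) :=
  le_csSup (isCompact_Icc.image_of_continuousOn hf).bddAbove (mem_image_of_mem f ht)

end WeightedIntegrals

theorem integral_trapezoidCutoff_sq_mul_deriv {r : ℝ} {ψ ψ' : ℝ → ℝ} (hr : 2 ≤ r)
    (hψ : ∀ x, HasDerivAt ψ (ψ' x) x) (hψ' : Continuous ψ') :
    ∫ t in (0:ℝ)..r, trapezoidCutoff r t ^ 2 * ψ' t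
      = (∫ t in (r - 1)..r, 2 * (r - t) * ψ t) - ∫ t in (0:ℝ)..1, 2 * t * ψ t := by
  have hF : Continuous fun t => trapezoidCutoff r t ^ 2 * ψ' t :=
    ((continuous_trapezoidCutoff hr).pow 2).mul hψ'
  rw [← integral_add_adjacent_intervals (hF.intervalIntegrable 0 1) (hF.intervalIntegrable 1 r),
    ← integral_add_adjacent_intervals (hF.intervalIntegrable 1 (r - 1))
      (hF.intervalIntegrable (r - 1) r)]
  have ramp_up : ∫ t in (0:ℝ)..1, trapezoidCutoff r t ^ 2 * ψ' t
      = ψ 1 - ∫ t in (0:ℝ)..1, 2 * t * ψ t := by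
    rw [integral_congr (g := fun t => t ^ 2 * ψ' t) fun t ht => by
      rw [trapezoidCutoff_of_le_one (uIcc_of_le (zero_le_one' ℝ) ▸ ht).2]]
    simpa using integral_sub_sq_mul_deriv (a := 0) (fun x _ => hψ x) (hψ'.intervalIntegrable 0 1)
  have plateau :
      ∫ t in (1:ℝ)..(r - 1), trapezoidCutoff r t ^ 2 * ψ' t = ψ (r - 1) - ψ 1 := by
    rw [integral_congr (g := ψ') fun t ht => by
      rw [trapezoidCutoff_of_mem_Icc (uIcc_of_le (by linarith : (1:ℝ) ≤ r - 1) ▸ ht),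
        one_pow, one_mul]]
    exact integral_eq_sub_of_hasDerivAt (fun x _ => hψ x) (hψ'.intervalIntegrable _ _)
  have ramp_down : ∫ t in (r - 1)..r, trapezoidCutoff r t ^ 2 * ψ' t
      = (∫ t in (r - 1)..r, 2 * (r - t) * ψ t) - ψ (r - 1) := by
    rw [integral_congr (g := fun t => (r - t) ^ 2 * ψ' t) fun t ht => by
      rw [trapezoidCutoff_of_sub_one_le hr (uIcc_of_le (by linarith : r - 1 ≤ r) ▸ ht).1]]
    simpa using integral_sq_sub_mul_deriv (fun x _ => hψ x) (hψ'.intervalIntegrable (r - 1) r)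
  rw [ramp_up, plateau, ramp_down]
  ring

/-- Integration-by-parts estimate (inequality (5.3)) in the proof of Proposition 5.1,
with the standard trapezoidal cutoff. -/
theorem stmt_3 (r : ℝ) (hr : 2 ≤ r) (ψ : ℝ → ℝ) (hψ : ContDiff ℝ 1 ψ) :
    (∫ t in (0:ℝ)..r,
        (if t ≤ 1 then t else if t ≤ r - 1 then 1 else r - t) ^ 2 * deriv ψ t)
      ≤ sSup ((fun t => |ψ t|) '' Icc (0:ℝ) 1) + sSup (ψ '' Icc (r - 1) r) := by
  have hψc : Continuous ψ := hψ.continuous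
  have hd : ∀ x, HasDerivAt ψ (deriv ψ x) x := fun x =>
    (hψ.differentiable one_ne_zero x).hasDerivAt
  change ∫ t in (0:ℝ)..r, trapezoidCutoff r t ^ 2 * deriv ψ t ≤ _
  rw [integral_trapezoidCutoff_sq_mul_deriv hr hd (hψ.continuous_deriv le_rfl)]
  have hw₀ : ∫ t in (0:ℝ)..1, 2 * t = 1 := by
    rw [intervalIntegral.integral_const_mul, integral_id]
    norm_num
  have hw₁ : ∫ t in (r - 1)..r, 2 * (r - t) = 1 := by
    rw [integral_comp_sub_left (fun x => 2 * x) r]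
    simpa using hw₀
  have left := le_integral_mul_of_forall_le (w := fun t => 2 * t) (a := 0) (b := 1) zero_le_one
    (fun t ht => by linarith [ht.1]) ((by fun_prop : Continuous _).intervalIntegrable _ _)
    ((by fun_prop : Continuous _).intervalIntegrable _ _)
    fun t ht => neg_le_of_abs_le (le_sSup_image_Icc hψc.abs.continuousOn ht)
  have right := integral_mul_le_of_forall_le (w := fun t => 2 * (r - t)) (a := r - 1) (b := r)
    (by linarith)
    (fun t ht => by linarith [ht.2]) ((by fun_prop : Continuous _).intervalIntegrable _ _)
    ((by fun_prop : Continuous _).intervalIntegrable _ _)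
    fun t ht => le_sSup_image_Icc hψc.continuousOn ht
  rw [hw₀, one_mul] at left
  rw [hw₁, one_mul] at right
  linarith
end
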